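/- arXiv:1401.6140 — 4 statements merged into one kernel-verified Lean document; each statement's English description precedes it below -/
import Mathlib

section
/- Let c(x) = (1+\sqrt{1-x^2}) e^{-\sqrt{1-x^2}}. Then c is strictly increasing on [0,1] and satisfies c(x) \geq x for all x in [0,1], with equality if and only if x = 1. -/
/-!
Put `t = √(1 - x²)`, so that `c(x) = g(t)` with `g(t) = (1 + t) e^{-t}`. Since `g'(t) = -t e^{-t}`,
`g` decreases on `[0, ∞)`, and `t` decreases in `x`, so `c` increases. Conversely `x = √(1 - t²)`,
and for `0 < t < 1` the inequality `x < c(x)` reads `1 - t² < (1 + t)² e^{-2t}`, that is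
`e^{2t} < (1 + t) / (1 - t)`, i.e. `t < artanh t`.
-/

open Real Set

theorem strictAntiOn_one_add_mul_exp_neg :
    StrictAntiOn (fun t : ℝ => (1 + t) * exp (-t)) (Ici 0) := by
  refine strictAntiOn_of_deriv_neg (convex_Ici 0) (by fun_prop) fun t ht => ?_
  rw [interior_Ici] at ht
  have hderiv : HasDerivAt (fun t : ℝ => (1 + t) * exp (-t)) (-(t * exp (-t))) t :=
    (((hasDerivAt_id' t).const_add 1).mul (hasDerivAt_neg t).exp).congr_deriv (by ring)
  rw [hderiv.deriv, neg_lt_zero]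
  exact mul_pos ht (exp_pos _)

theorem two_mul_lt_log_one_add_div_one_sub {t : ℝ} (h₀ : 0 < t) (h₁ : t < 1) :
    2 * t < log ((1 + t) / (1 - t)) := by
  have h := sum_range_le_log_div h₀.le h₁ 2
  norm_num [Finset.sum_range_succ] at h
  linarith [pow_pos h₀ 3]

theorem exp_two_mul_mul_one_sub_lt {t : ℝ} (h₀ : 0 < t) (h₁ : t < 1) :
    exp (2 * t) * (1 - t) < 1 + t := by
  have h := (lt_log_iff_exp_lt (div_pos (by linarith) (by linarith))).1
    (two_mul_lt_log_one_add_div_one_sub h₀ h₁)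
  rwa [lt_div_iff₀ (by linarith)] at h

theorem sqrt_one_sub_sq_lt_one_add_mul_exp_neg {t : ℝ} (h₀ : 0 < t) (h₁ : t ≤ 1) :
    √(1 - t ^ 2) < (1 + t) * exp (-t) := by
  rw [sqrt_lt' (by positivity)]
  rcases h₁.lt_or_eq with h₁ | rfl
  · have key : 1 - t < (1 + t) * exp (-t) ^ 2 := by
      rw [← exp_nat_mul, Nat.cast_ofNat, mul_neg, exp_neg, ← div_eq_mul_inv,
        lt_div_iff₀' (exp_pos _)]
      exact exp_two_mul_mul_one_sub_lt h₀ h₁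
    calc 1 - t ^ 2 = (1 + t) * (1 - t) := by ring
      _ < (1 + t) * ((1 + t) * exp (-t) ^ 2) := mul_lt_mul_of_pos_left key (by linarith)
      _ = ((1 + t) * exp (-t)) ^ 2 := by ring
  · norm_num
    positivity

theorem strictAntiOn_sqrt_one_sub_sq : StrictAntiOn (fun x : ℝ => √(1 - x ^ 2)) (Icc 0 1) :=
  fun x hx y hy hxy => sqrt_lt_sqrt (by nlinarith [hy.2, hx.1]) (by nlinarith [hx.1])

theorem sqrt_one_sub_sq_sqrt_one_sub_sq {x : ℝ} (hx : x ∈ Icc (0 : ℝ) 1) :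
    √(1 - √(1 - x ^ 2) ^ 2) = x := by
  rw [sq_sqrt (by nlinarith [hx.1, hx.2]), sub_sub_cancel, sqrt_sq hx.1]

theorem c_strictMono_and_ge :
    StrictMonoOn (fun x : ℝ => (1 + Real.sqrt (1 - x^2)) * Real.exp (-Real.sqrt (1 - x^2)))
      (Set.Icc 0 1) ∧
    ∀ x ∈ Set.Icc (0:ℝ) 1,
      x ≤ (1 + Real.sqrt (1 - x^2)) * Real.exp (-Real.sqrt (1 - x^2)) ∧
      ((1 + Real.sqrt (1 - x^2)) * Real.exp (-Real.sqrt (1 - x^2)) = x ↔ x = 1) := by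
  refine ⟨strictAntiOn_one_add_mul_exp_neg.comp strictAntiOn_sqrt_one_sub_sq
    fun x _ => sqrt_nonneg _, fun x hx => ?_⟩
  rcases hx.2.lt_or_eq with hx₁ | rfl
  · have hs₀ : 0 < √(1 - x ^ 2) := sqrt_pos.2 (by nlinarith [hx.1])
    have hs₁ : √(1 - x ^ 2) ≤ 1 := sqrt_le_one.2 (by nlinarith)
    have hlt := sqrt_one_sub_sq_lt_one_add_mul_exp_neg hs₀ hs₁
    rw [sqrt_one_sub_sq_sqrt_one_sub_sq hx] at hlt
    exact ⟨hlt.le, iff_of_false hlt.ne' hx₁.ne⟩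
  · norm_num
end

section
/- Fix r in (0,1) and \gamma with \gamma^2 > c(r), where c(x) = (1+\sqrt{1-x^2})e^{-\sqrt{1-x^2}}. Define \phi : [0, 1/r] \to \mathbb{R} by \phi(x) = (c(rx)/\gamma^2 + x)/2. Then \phi maps [0,1/r] into itself, is a strict contraction (in fact 0 < \phi'(x) < 1), has a unique fixed point \ell in [0,1/r], and \ell < 1. -/
/-- The function `c(x) = (1+√(1-x²)) e^{-√(1-x²)}`. -/
noncomputable def cfun (x : ℝ) : ℝ :=
  (1 + Real.sqrt (1 - x^2)) * Real.exp (-Real.sqrt (1 - x^2))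

/-- The map `φ(x) = (c(rx)/γ² + x)/2`. -/
noncomputable def phifun (r γ x : ℝ) : ℝ := (cfun (r * x) / γ^2 + x) / 2

/-!
Since `c'(x) = x e^{-√(1-x²)} ≤ 1`, the function `c(x) - x` is antitone on `[-1, 1]` and vanishes
at `1`, so `c(x) ≥ x` there; in particular `γ² > c(r) ≥ r`. This bounds `φ'` in `(0, 1)` and
makes `g(x) = c(rx) - γ² x`, whose zeros are the fixed points of `φ`, strictly antitone on
`[0, 1/r]`. As `g(0) > 0 > g(1/r)`, `g` has exactly one zero `ℓ` there, and
`g(1) = c(r) - γ² < 0` forces `ℓ < 1`.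
-/

open Real Set

lemma existsUnique_eq_zero_of_strictAntiOn {f : ℝ → ℝ} {a b : ℝ} (hab : a ≤ b)
    (hf : ContinuousOn f (Icc a b)) (hanti : StrictAntiOn f (Icc a b))
    (ha : 0 ≤ f a) (hb : f b ≤ 0) :
    ∃! x, x ∈ Icc a b ∧ f x = 0 := by
  obtain ⟨x, hx, hfx⟩ := intermediate_value_Icc' hab hf ⟨hb, ha⟩
  exact ⟨x, ⟨hx, hfx⟩, fun y ⟨hy, hfy⟩ => hanti.injOn hy hx (hfy.trans hfx.symm)⟩

lemma mul_mem_Icc_of_mem_Icc_inv {r x : ℝ} (hr : 0 < r) (hx : x ∈ Icc 0 (1 / r)) :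
    r * x ∈ Icc 0 1 :=
  ⟨mul_nonneg hr.le hx.1, by simpa [mul_comm] using (le_div_iff₀ hr).1 hx.2⟩

lemma mul_exp_neg_sqrt_le_one {y : ℝ} (hy : y ≤ 1) : y * exp (-√(1 - y ^ 2)) ≤ 1 := by
  have he : exp (-√(1 - y ^ 2)) ≤ 1 := exp_le_one_iff.2 (neg_nonpos.2 (sqrt_nonneg _))
  have he0 := exp_pos (-√(1 - y ^ 2))
  rcases le_total y 0 with hy0 | hy0 <;> nlinarith

@[fun_prop]
lemma continuous_cfun : Continuous cfun := by
  unfold cfun; fun_prop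

lemma cfun_pos (x : ℝ) : 0 < cfun x := by
  unfold cfun
  positivity

lemma cfun_le_one (x : ℝ) : cfun x ≤ 1 := by
  unfold cfun
  rw [exp_neg, ← div_eq_mul_inv, div_le_one (exp_pos _)]
  linarith [add_one_le_exp √(1 - x ^ 2)]

lemma cfun_one : cfun 1 = 1 := by norm_num [cfun]

lemma hasDerivAt_cfun {x : ℝ} (hx : x ∈ Ioo (-1) 1) :
    HasDerivAt cfun (x * exp (-√(1 - x ^ 2))) x := by
  have hpos : 0 < 1 - x ^ 2 := by nlinarith [hx.1, hx.2]
  have hs : HasDerivAt (fun y => √(1 - y ^ 2)) (-x / √(1 - x ^ 2)) x := by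
    convert ((hasDerivAt_pow 2 x).const_sub 1).sqrt hpos.ne' using 1
    field_simp
    ring
  refine ((hs.const_add 1).mul hs.neg.exp).congr_deriv ?_
  simp only [Pi.neg_apply]
  field_simp
  ring

lemma antitoneOn_cfun_sub_id : AntitoneOn (fun x => cfun x - x) (Icc (-1) 1) := by
  have hderiv {x : ℝ} (hx : x ∈ Ioo (-1) 1) :
      HasDerivAt (fun x => cfun x - x) (x * exp (-√(1 - x ^ 2)) - 1) x :=
    (hasDerivAt_cfun hx).sub (hasDerivAt_id x)
  refine antitoneOn_of_deriv_nonpos (convex_Icc _ _) (continuous_cfun.sub continuous_id).continuousOn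
    ?_ fun x hx => ?_ <;> rw [interior_Icc] at *
  · exact fun x hx => (hderiv hx).differentiableAt.differentiableWithinAt
  · rw [(hderiv hx).deriv, sub_nonpos]
    exact mul_exp_neg_sqrt_le_one hx.2.le

lemma self_le_cfun {x : ℝ} (hx : x ∈ Icc (-1) 1) : x ≤ cfun x := by
  have := antitoneOn_cfun_sub_id hx (right_mem_Icc.2 (by norm_num)) hx.2
  simp only [cfun_one, sub_self] at this
  linarith

section Phi

variable {r γ x : ℝ}

lemma phifun_eq_self_iff (hγ : γ ≠ 0) : phifun r γ x = x ↔ cfun (r * x) - γ ^ 2 * x = 0 := by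
  unfold phifun
  constructor <;> intro h <;> field_simp at * <;> linarith

lemma mapsTo_phifun (hr : 0 < r) (hrγ : r ≤ γ ^ 2) :
    MapsTo (phifun r γ) (Icc 0 (1 / r)) (Icc 0 (1 / r)) := by
  intro x ⟨hx0, hx1⟩
  have hc : cfun (r * x) / γ ^ 2 ≤ 1 / r :=
    div_le_div₀ zero_le_one (cfun_le_one _) hr hrγ
  have hc0 := (cfun_pos (r * x)).le
  exact ⟨by unfold phifun; positivity, by unfold phifun; linarith⟩

lemma hasDerivAt_phifun (hx : r * x ∈ Ioo (-1) 1) :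
    HasDerivAt (phifun r γ) ((r * ((r * x) * exp (-√(1 - (r * x) ^ 2))) / γ ^ 2 + 1) / 2) x := by
  have hc : HasDerivAt (fun y => cfun (r * y)) ((r * x) * exp (-√(1 - (r * x) ^ 2)) * r) x :=
    (hasDerivAt_cfun hx).comp x ((hasDerivAt_id x).const_mul r |>.congr_deriv (mul_one r))
  exact (((hc.div_const _).add (hasDerivAt_id x)).div_const 2).congr_deriv (by ring)

lemma phifun_slope_mem_Ioo (hr : 0 < r) (hrγ : r < γ ^ 2) (hx : r * x ∈ Icc 0 1) :
    (r * ((r * x) * exp (-√(1 - (r * x) ^ 2))) / γ ^ 2 + 1) / 2 ∈ Ioo 0 1 := by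
  have hγ : 0 < γ ^ 2 := hr.trans hrγ
  have hnonneg : 0 ≤ r * ((r * x) * exp (-√(1 - (r * x) ^ 2))) / γ ^ 2 := by
    have := hx.1
    positivity
  have hlt : r * ((r * x) * exp (-√(1 - (r * x) ^ 2))) / γ ^ 2 < 1 := by
    rw [div_lt_one hγ]
    calc r * ((r * x) * exp (-√(1 - (r * x) ^ 2))) ≤ r * 1 :=
          mul_le_mul_of_nonneg_left (mul_exp_neg_sqrt_le_one hx.2) hr.le
      _ < γ ^ 2 := by rwa [mul_one]
  constructor <;> linarith

lemma strictAntiOn_cfun_mul_sub_mul {a : ℝ} (hr : 0 < r) (hra : r < a) :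
    StrictAntiOn (fun x => cfun (r * x) - a * x) (Icc 0 (1 / r)) := by
  intro x hx y hy hxy
  have hmem {z : ℝ} (hz : z ∈ Icc 0 (1 / r)) : r * z ∈ Icc (-1) 1 :=
    Icc_subset_Icc (by norm_num) le_rfl (mul_mem_Icc_of_mem_Icc_inv hr hz)
  have := antitoneOn_cfun_sub_id (hmem hx) (hmem hy) (mul_le_mul_of_nonneg_left hxy.le hr.le)
  dsimp only at this ⊢
  nlinarith

end Phi

theorem phi_contraction_fixed_point (r γ : ℝ) (hr : r ∈ Set.Ioo (0:ℝ) 1)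
    (hγ : cfun r < γ^2) :
    Set.MapsTo (phifun r γ) (Set.Icc 0 (1/r)) (Set.Icc 0 (1/r)) ∧
    (∀ x ∈ Set.Ioo (0:ℝ) (1/r),
      HasDerivAt (phifun r γ)
        ((r * ((r*x) * Real.exp (-Real.sqrt (1 - (r*x)^2))) / γ^2 + 1) / 2) x ∧
      0 < (r * ((r*x) * Real.exp (-Real.sqrt (1 - (r*x)^2))) / γ^2 + 1) / 2 ∧
      (r * ((r*x) * Real.exp (-Real.sqrt (1 - (r*x)^2))) / γ^2 + 1) / 2 < 1) ∧
    (∃! ℓ : ℝ, ℓ ∈ Set.Icc (0:ℝ) (1/r) ∧ phifun r γ ℓ = ℓ) ∧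
    (∀ ℓ ∈ Set.Icc (0:ℝ) (1/r), phifun r γ ℓ = ℓ → ℓ < 1) := by
  obtain ⟨hr0, hr1⟩ := hr
  have hrγ : r < γ ^ 2 := (self_le_cfun ⟨by linarith, hr1.le⟩).trans_lt hγ
  have hγ0 : γ ≠ 0 := by rintro rfl; linarith [cfun_pos r]
  have hanti := strictAntiOn_cfun_mul_sub_mul (a := γ ^ 2) hr0 hrγ
  refine ⟨mapsTo_phifun hr0 hrγ.le, fun x hx => ?_, ?_, fun ℓ hℓ hfix => ?_⟩
  · have hrx : r * x ∈ Ioo 0 1 :=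
      ⟨mul_pos hr0 hx.1, by simpa [mul_comm] using (lt_div_iff₀ hr0).1 hx.2⟩
    exact ⟨hasDerivAt_phifun (Ioo_subset_Ioo_left (by norm_num) hrx),
      phifun_slope_mem_Ioo hr0 hrγ (Ioo_subset_Icc_self hrx)⟩
  · simp only [phifun_eq_self_iff hγ0]
    refine existsUnique_eq_zero_of_strictAntiOn (by positivity) (by fun_prop) hanti ?_ ?_
    · simpa using (cfun_pos 0).le
    · rw [mul_one_div_cancel hr0.ne', cfun_one, sub_nonpos, mul_one_div, le_div_iff₀ hr0]
      linarith
  · rw [phifun_eq_self_iff hγ0] at hfix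
    have hone : (1 : ℝ) ∈ Icc 0 (1 / r) := ⟨zero_le_one, by rw [le_div_iff₀ hr0, one_mul]; exact hr1.le⟩
    have hlt : cfun (r * 1) - γ ^ 2 * 1 < cfun (r * ℓ) - γ ^ 2 * ℓ := by simpa [hfix] using hγ
    exact (hanti.lt_iff_gt hone hℓ).1 hlt
end

section
/- Let \mathcal{G} = (X, E) be a graph on a compact homogeneous space X (acted on transitively by a compact group \Gamma of graph automorphisms, with induced probability measure), let V \subseteq X be a Borel set with a finite positive Borel measure \lambda, 0 < \lambda(V) < \infty, and let G be the subgraph induced on V. Then \alpha_X(\mathcal{G}) \leq \alpha_\lambda(G)/\lambda(V), where \alpha_X(\mathcal{G}) is the supremum of \mathrm{vol}_X(A) over measurable independent sets A of \mathcal{G}, and \alpha_\lambda(G) is the supremum of \lambda(B) over measurable independent sets B \subseteq V of G. -/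
/-!
Double counting: integrate the indicator of `γ • x ∈ A` over `(x, γ) ∈ V × Γ`. Integrating out `γ`
first gives `vol A` for every `x`, since by transitivity and invariance of the Haar measure each
fibre `{γ | γ • x ∈ A}` is a right translate of `{γ | γ • p ∈ A}`. Integrating out `x` first gives
`λ(γ⁻¹A ∩ V)`, which is at most `α_λ(G)` because `γ⁻¹A` is again independent. Hence
`vol A · λ(V) ≤ α_λ(G)`.
-/

open MeasureTheory

def IsIndependent {X : Type*} (E : X → X → Prop) (A : Set X) : Prop :=
  ∀ x ∈ A, ∀ y ∈ A, ¬ E x y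

theorem IsIndependent.preimage {X Y : Type*} {E : X → X → Prop} {F : Y → Y → Prop}
    {A : Set X} (hA : IsIndependent E A) {f : Y → X} (hf : ∀ x y, F x y → E (f x) (f y)) :
    IsIndependent F (f ⁻¹' A) :=
  fun x hx y hy hxy => hA _ hx _ hy (hf x y hxy)

theorem IsIndependent.mono {X : Type*} {E : X → X → Prop} {A B : Set X}
    (hA : IsIndependent E A) (hBA : B ⊆ A) : IsIndependent E B :=
  fun x hx y hy => hA x (hBA hx) y (hBA hy)

theorem lintegral_measure_setOf_smul_mem_comm {Γ X : Type*} [MeasurableSpace Γ]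
    [MeasurableSpace X] [SMul Γ X] [MeasurableSMul₂ Γ X] (μ : Measure Γ) (ν : Measure X)
    [SFinite μ] [SFinite ν] {A : Set X} (hA : MeasurableSet A) :
    ∫⁻ x, μ {γ | γ • x ∈ A} ∂ν = ∫⁻ γ, ν {x | γ • x ∈ A} ∂μ := by
  have hS : MeasurableSet {q : X × Γ | q.2 • q.1 ∈ A} :=
    hA.preimage (measurable_snd.smul measurable_fst)
  exact (Measure.prod_apply hS).symm.trans (Measure.prod_apply_symm hS)

theorem measure_setOf_smul_mem_eq_map_apply {Γ X : Type*} [Group Γ] [MeasurableSpace Γ]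
    [MeasurableMul Γ] [MeasurableSpace X] [MulAction Γ X] [MeasurableSMul Γ X]
    [MulAction.IsPretransitive Γ X] (μ : Measure Γ) [μ.IsMulRightInvariant] (p x : X)
    {A : Set X} (hA : MeasurableSet A) :
    μ {γ | γ • x ∈ A} = μ.map (· • p) A := by
  obtain ⟨g, rfl⟩ := MulAction.exists_smul_eq Γ p x
  have hfibre : {γ : Γ | γ • g • p ∈ A} = (· * g) ⁻¹' {γ | γ • p ∈ A} := by
    ext γ
    simp [mul_smul]
  rw [Measure.map_apply (measurable_smul_const p) hA, hfibre, measure_preimage_mul_right]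
  rfl

theorem independence_volume_le_subgraph_ratio_general (Γ X : Type*) [Group Γ]
    [TopologicalSpace Γ] [IsTopologicalGroup Γ]
    [MeasurableSpace Γ] [BorelSpace Γ]
    [MeasurableSpace X] [MulAction Γ X] [MeasurableSMul₂ Γ X]
    [MulAction.IsPretransitive Γ X]
    (μ : Measure Γ) [IsProbabilityMeasure μ]
    [μ.IsMulRightInvariant]
    (p : X)
    (E : X → X → Prop)
    (hEinv : ∀ (γ : Γ) (x y : X), E x y → E (γ • x) (γ • y))
    (V : Set X) (hV : MeasurableSet V)
    (lam : Measure X)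
    (hlam0 : 0 < lam V) (hlamtop : lam V < ⊤) :
    (⨆ (A : Set X) (_ : MeasurableSet A ∧ ∀ x ∈ A, ∀ y ∈ A, ¬ E x y),
        (μ.map (fun γ : Γ => γ • p)) A) ≤
      (⨆ (B : Set X) (_ : B ⊆ V ∧ MeasurableSet B ∧ ∀ x ∈ B, ∀ y ∈ B, ¬ E x y),
        lam B) / lam V := by
  refine iSup₂_le fun A ⟨hA, (hAind : IsIndependent E A)⟩ => ?_
  rw [ENNReal.le_div_iff_mul_le (Or.inl hlam0.ne') (Or.inl hlamtop.ne)]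
  have : IsFiniteMeasure (lam.restrict V) := ⟨by simpa using hlamtop⟩
  have hslice (γ : Γ) : lam.restrict V {x | γ • x ∈ A} ≤
      ⨆ (B : Set X) (_ : B ⊆ V ∧ MeasurableSet B ∧ ∀ x ∈ B, ∀ y ∈ B, ¬ E x y), lam B := by
    have hAγ : MeasurableSet {x | γ • x ∈ A} := measurable_const_smul γ hA
    rw [Measure.restrict_apply hAγ]
    refine le_iSup₂_of_le (f := fun B _ => lam B) _
      ⟨Set.inter_subset_right, hAγ.inter hV, ?_⟩ le_rfl
    exact (hAind.preimage (hEinv γ)).mono Set.inter_subset_left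
  calc μ.map (· • p) A * lam V
      = ∫⁻ x, μ {γ | γ • x ∈ A} ∂lam.restrict V := by
        simp only [measure_setOf_smul_mem_eq_map_apply μ p _ hA]
        rw [lintegral_const, Measure.restrict_apply_univ]
    _ = ∫⁻ γ, lam.restrict V {x | γ • x ∈ A} ∂μ := lintegral_measure_setOf_smul_mem_comm μ _ hA
    _ ≤ _ := (lintegral_mono hslice).trans_eq (by simp)

theorem independence_volume_le_subgraph_ratio (Γ X : Type*) [Group Γ]
    [TopologicalSpace Γ] [IsTopologicalGroup Γ] [CompactSpace Γ]
    [MeasurableSpace Γ] [BorelSpace Γ]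
    [MeasurableSpace X] [MulAction Γ X] [MeasurableSMul Γ X] [MeasurableSMul₂ Γ X]
    [MulAction.IsPretransitive Γ X]
    (μ : Measure Γ) [IsProbabilityMeasure μ] [μ.IsMulLeftInvariant]
    [μ.IsMulRightInvariant]
    (p : X)
    (E : X → X → Prop) (hEsymm : ∀ x y, E x y → E y x)
    (hEinv : ∀ (γ : Γ) (x y : X), E x y → E (γ • x) (γ • y))
    (V : Set X) (hV : MeasurableSet V)
    (lam : Measure X) [IsFiniteMeasure lam] (hlamV : lam Vᶜ = 0)
    (hlam0 : 0 < lam V) (hlamtop : lam V < ⊤) :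
    (⨆ (A : Set X) (_ : MeasurableSet A ∧ ∀ x ∈ A, ∀ y ∈ A, ¬ E x y),
        (μ.map (fun γ : Γ => γ • p)) A) ≤
      (⨆ (B : Set X) (_ : B ⊆ V ∧ MeasurableSet B ∧ ∀ x ∈ B, ∀ y ∈ B, ¬ E x y),
        lam B) / lam V :=
  independence_volume_le_subgraph_ratio_general Γ X μ p E hEinv V hV lam hlam0 hlamtop
end

section
/- For finite vertex-transitive graphs, the subgraph density inequality holds: if \mathcal{G} = (X, E) is a finite graph whose automorphism group acts transitively on X, and G is the subgraph induced on a subset V \subseteq X, then \alpha(\mathcal{G})/|X| \leq \alpha(G)/|V|. -/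
open scoped Classical

/-!
Fix a maximum independent set `A` of `G` and let `γ` run over the automorphism group. By
transitivity, every vertex is sent into `V` by the same proportion `|V| / |X|` of automorphisms,
so on average `γ • A ∩ V` has `|A| |V| / |X|` elements. Some `γ` does at least as well as the
average, and `γ • A ∩ V` is an independent subset of `V`.
-/

open Finset MulAction
open scoped Pointwise

namespace MulAction

variable {Γ X : Type*} [Group Γ] [MulAction Γ X]

theorem card_smul_finset_inter (γ : Γ) (A V : Finset X) :
    #(γ • A ∩ V) = #{a ∈ A | γ • a ∈ V} := by
  rw [← smul_inv_smul γ V, ← smul_finset_inter, card_smul_finset, smul_inv_smul]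
  congr 1
  ext a
  simp [mem_inv_smul_finset_iff]

variable [Fintype Γ] [IsPretransitive Γ X]

theorem card_filter_smul_eq_card_filter_smul (x v w : X) :
    #{γ : Γ | γ • x = v} = #{γ : Γ | γ • x = w} := by
  obtain ⟨g, rfl⟩ := exists_smul_eq Γ v w
  exact card_equiv (Equiv.mulLeft g) fun γ => by simp [mul_smul]

variable [Fintype X]

theorem card_filter_smul_mem_mul_card (x : X) (V : Finset X) :
    #{γ : Γ | γ • x ∈ V} * Fintype.card X = #V * Fintype.card Γ := by
  set c := #{γ : Γ | γ • x = x}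
  have hfiber (v : X) : #{γ : Γ | γ • x = v} = c := card_filter_smul_eq_card_filter_smul x v x
  have hΓ : Fintype.card Γ = Fintype.card X * c := by
    rw [← card_univ, card_eq_sum_card_fiberwise (f := (· • x)) (t := univ) (by simp)]
    simp [hfiber]
  have hV : #{γ : Γ | γ • x ∈ V} = #V * c := by
    rw [card_eq_sum_card_fiberwise (f := (· • x)) (s := {γ : Γ | γ • x ∈ V})
      (t := V) fun γ hγ => (mem_filter.1 hγ).2, sum_congr rfl fun v hv => ?_, sum_const,
      smul_eq_mul]
    rw [filter_filter, ← hfiber v]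
    congr 1
    exact filter_congr fun γ _ => ⟨And.right, fun h => ⟨h ▸ hv, h⟩⟩
  rw [hΓ, hV]
  ring

theorem sum_card_smul_finset_inter_mul_card (A V : Finset X) :
    ∑ γ : Γ, #(γ • A ∩ V) * Fintype.card X = #A * #V * Fintype.card Γ := by
  have hswap : ∑ γ : Γ, #(γ • A ∩ V) = ∑ a ∈ A, #{γ : Γ | γ • a ∈ V} := by
    simp only [card_smul_finset_inter, card_filter]
    exact sum_comm
  rw [← sum_mul, hswap, sum_mul, sum_congr rfl fun a _ => card_filter_smul_mem_mul_card a V,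
    sum_const, smul_eq_mul, mul_assoc]

theorem exists_card_mul_card_le_card_smul_finset_inter_mul_card (A V : Finset X) :
    ∃ γ : Γ, #A * #V ≤ #(γ • A ∩ V) * Fintype.card X := by
  obtain ⟨γ, -, hγ⟩ := exists_le_of_sum_le univ_nonempty (f := fun _ : Γ => #A * #V)
    (g := fun γ => #(γ • A ∩ V) * Fintype.card X)
    (by rw [sum_card_smul_finset_inter_mul_card, sum_const, card_univ, smul_eq_mul, mul_comm])
  exact ⟨γ, hγ⟩

end MulAction

theorem SimpleGraph.Iso.forall_not_adj_smul_finset {X : Type*} {G : SimpleGraph X}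
    {A : Finset X} (hA : ∀ x ∈ A, ∀ y ∈ A, ¬ G.Adj x y) (γ : G ≃g G) :
    ∀ x ∈ γ • A, ∀ y ∈ γ • A, ¬ G.Adj x y := by
  simp only [mem_smul_finset, RelIso.smul_def]
  rintro _ ⟨a, ha, rfl⟩ _ ⟨b, hb, rfl⟩
  rw [γ.map_rel_iff]
  exact hA a ha b hb

theorem vertex_transitive_subgraph_ratio (X : Type*) [Fintype X] (G : SimpleGraph X)
    (htrans : ∀ x y : X, ∃ e : SimpleGraph.Iso G G, e x = y)
    (V : Finset X) (hV : V.Nonempty) :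
    (((Finset.univ.powerset.filter
        (fun A : Finset X => ∀ x ∈ A, ∀ y ∈ A, ¬ G.Adj x y)).sup Finset.card : ℕ) : ℝ)
      / Fintype.card X ≤
    (((V.powerset.filter
        (fun A : Finset X => ∀ x ∈ A, ∀ y ∈ A, ¬ G.Adj x y)).sup Finset.card : ℕ) : ℝ)
      / V.card := by
  have : Finite (G ≃g G) := Finite.of_injective _ (DFunLike.coe_injective (F := G ≃g G))
  have : Fintype (G ≃g G) := Fintype.ofFinite _
  have : IsPretransitive (G ≃g G) X := ⟨htrans⟩
  obtain ⟨A, hA, hAcard⟩ := exists_mem_eq_sup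
    (univ.powerset.filter fun A : Finset X => ∀ x ∈ A, ∀ y ∈ A, ¬ G.Adj x y) ⟨∅, by simp⟩ card
  obtain ⟨γ, hγ⟩ := exists_card_mul_card_le_card_smul_finset_inter_mul_card (Γ := G ≃g G) A V
  have hγA := SimpleGraph.Iso.forall_not_adj_smul_finset (mem_filter.1 hA).2 γ
  have hγV : #(γ • A ∩ V) ≤ (V.powerset.filter fun B => ∀ x ∈ B, ∀ y ∈ B, ¬ G.Adj x y).sup card :=
    le_sup <| mem_filter.2 ⟨mem_powerset.2 inter_subset_right,
      fun x hx y hy => hγA x (mem_inter.1 hx).1 y (mem_inter.1 hy).1⟩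
  have hX : 0 < Fintype.card X := Fintype.card_pos_iff.2 ⟨hV.choose⟩
  rw [hAcard, div_le_div_iff₀ (by positivity) (by positivity)]
  exact_mod_cast hγ.trans (Nat.mul_le_mul_right _ hγV)
end
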